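/- arXiv:2208.03935 — 2 statements merged into one kernel-verified Lean document; each statement's English description precedes it below -/
import Mathlib

section
/- The rejection flow of the geometric-allocation kernel is symmetric under reflection of the shift parameter about W/2: for every state i and every s ∈ (0, W), the diagonal flow computed with shift s equals the diagonal flow computed with shift W − s, i.e. v_{ii}(s) = v_{ii}(W − s). -/
/-- The geometric-allocation stochastic flow determined by the periodic shift `s`
of the cumulative weight tower of `π`.  Here states are `0`-indexed, so
`F i = ∑ k ≤ i, π k` plays the role of `F_i` and `∑ k < j, π k` plays the role
of `F_{j-1}`, and `W = ∑ k, π k = F_n`. -/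
noncomputable def gaFlow {n : ℕ} (π : Fin n → ℝ) (s : ℝ) (i j : Fin n) : ℝ :=
  let W : ℝ := ∑ k, π k
  let Δ : ℝ := (∑ k ∈ Finset.Iic i, π k) - (∑ k ∈ Finset.Iio j, π k) + s
  max 0 (min (min Δ (π i + π j - Δ)) (min (π i) (π j))) +
    max 0 (min (min (Δ - W) (π i + π j + W - Δ)) (min (π i) (π j)))

lemma gaFlow_aux (p s W : ℝ) (hs : 0 < s) (hsW : s < W) :
    max 0 (min (min (p + s) (p + p - (p + s))) (min p p)) +
      max 0 (min (min (p + s - W) (p + p + W - (p + s))) (min p p)) =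
    max 0 (p - s) + max 0 (p + s - W) := by
  rw [min_self]
  have e1 : min (p + s) (p + p - (p + s)) = p - s := by
    rw [min_eq_right (by linarith)]; ring
  have e2 : min (p + s - W) (p + p + W - (p + s)) = p + s - W := by
    rw [min_eq_left (by linarith)]
  rw [e1, e2, min_eq_left (by linarith), min_eq_left (by linarith)]

/-- the rejection flow is symmetric under reflection of the shift
about `W / 2`: `v i i (s) = v i i (W - s)`. -/
theorem gaFlow_diag_reflect {n : ℕ} (hn : 1 ≤ n) (π : Fin n → ℝ)
    (hπ : ∀ i, 0 < π i) (s : ℝ) (hs : 0 < s) (hsW : s < ∑ k, π k) (i : Fin n) :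
    gaFlow π s i i = gaFlow π ((∑ k, π k) - s) i i := by
  set W : ℝ := ∑ k, π k with hW
  have hA : (∑ k ∈ Finset.Iic i, π k) = (∑ k ∈ Finset.Iio i, π k) + π i := by
    rw [← Finset.Iio_insert, Finset.sum_insert (by simp)]; ring
  have hΔ : ∀ t : ℝ, (∑ k ∈ Finset.Iic i, π k) - (∑ k ∈ Finset.Iio i, π k) + t
      = π i + t := by intro t; rw [hA]; ring
  unfold gaFlow
  simp only [← hW, hΔ]
  rw [gaFlow_aux (π i) s W hs hsW, gaFlow_aux (π i) (W - s) W (by linarith) (by linarith)]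
  ring_nf
end

section
/- The total rejection probability of the geometric-allocation kernel is minimized at s = W/2: for every shift parameter s ∈ (0, W), Σ_{i=1}^{n} v_{ii}(W/2) ≤ Σ_{i=1}^{n} v_{ii}(s), where v_{ii}(s) denotes the diagonal flow computed with shift s. -/
/-- The diagonal flow simplifies to `(πᵢ - s)₊ + (πᵢ - (W - s))₊`. -/
lemma gaFlow_diag {n : ℕ} (π : Fin n → ℝ) (s : ℝ) (i : Fin n)
    (hs : 0 < s) (hsW : s < ∑ k, π k) :
    gaFlow π s i i = max 0 (π i - s) + max 0 (π i - (∑ k, π k - s)) := by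
  have hd : (∑ k ∈ Finset.Iic i, π k) - (∑ k ∈ Finset.Iio i, π k) = π i := by
    rw [← Finset.Iio_insert, Finset.sum_insert (by simp)]
    ring
  unfold gaFlow
  dsimp only
  rw [hd, min_self]
  set W := ∑ k, π k
  rw [min_eq_right (by linarith : π i + π i - (π i + s) ≤ π i + s),
      min_eq_left (by linarith : π i + π i - (π i + s) ≤ π i),
      min_eq_left (by linarith : π i + s - W ≤ π i + π i + W - (π i + s)),
      min_eq_left (by linarith : π i + s - W ≤ π i)]
  ring_nf

/-- the total rejection probability of the geometric-allocation kernel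
is minimized at `s = W / 2`. -/
theorem gaFlow_total_rejection_min_at_half {n : ℕ} (hn : 1 ≤ n) (π : Fin n → ℝ)
    (hπ : ∀ i, 0 < π i) (s : ℝ) (hs : 0 < s) (hsW : s < ∑ k, π k) :
    ∑ i, gaFlow π ((∑ k, π k) / 2) i i ≤ ∑ i, gaFlow π s i i := by
  have hW : (0:ℝ) < ∑ k, π k := hs.trans hsW
  refine Finset.sum_le_sum fun i _ => ?_
  rw [gaFlow_diag π s i hs hsW, gaFlow_diag π _ i (by linarith) (by linarith)]
  set W := ∑ k, π k
  have h1 : π i - s ≤ max 0 (π i - s) := le_max_right _ _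
  have h2 : π i - (W - s) ≤ max 0 (π i - (W - s)) := le_max_right _ _
  have h3 : (0:ℝ) ≤ max 0 (π i - s) := le_max_left _ _
  have h4 : (0:ℝ) ≤ max 0 (π i - (W - s)) := le_max_left _ _
  rcases le_total (π i - W/2) 0 with h | h
  · rw [max_eq_left h, max_eq_left (by linarith : π i - (W - W/2) ≤ 0)]
    linarith
  · rw [max_eq_right h, max_eq_right (by linarith : (0:ℝ) ≤ π i - (W - W/2))]
    linarith
end
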